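/- arXiv:2512.17373 — 3 statements merged into one kernel-verified Lean document; each statement's English description precedes it below -/
import Mathlib

section
/- Let p be a prime. For all finite sets U ⊆ F_p^× × F_p (of left vertices) and V ⊆ F_p^× × F_p (of right vertices) of the bipartite graph G_p, the number e(U,V) of adjacent pairs satisfies | e(U,V) − |U|·|V|/p | ≤ √p · √(|U|·|V|). -/
/-!
Write `d(v)` for the number of neighbours in `U` of a right vertex `v`. Every left vertex has
`p - 1` neighbours, and two distinct left vertices have at most one common neighbour, none if they
share their second coordinate. Counting pairs in `U × U` through their common neighbours bounds
`∑ d(v)²`; the pairs sharing a second coordinate are at least `|U|²/p` by Cauchy–Schwarz over the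
`p` values of that coordinate, and this saving is exactly what keeps the variance of `d` around
its mean `|U|/p` below `(p - 1)|U|`. Cauchy–Schwarz over `V` then bounds
`e(U,V) - |U||V|/p = ∑_{v ∈ V} (d(v) - |U|/p)`.
-/

/-- Adjacency in the bipartite graph `G_p`: a left vertex `(a,c)` is adjacent to a
right vertex `(b,d)` iff there is `z ∈ F_p^×` with `b = z·a` and `d = z + c`. -/
def GpAdj (p : ℕ) (u v : (ZMod p)ˣ × ZMod p) : Prop :=
  ∃ z : (ZMod p)ˣ, v.1 = z * u.1 ∧ v.2 = (z : ZMod p) + u.2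

open Finset

theorem sq_card_le_card_mul_card_filter_eq {α β : Type*} [Fintype β] [DecidableEq β]
    (f : α → β) (s : Finset α) :
    #s ^ 2 ≤ Fintype.card β * #{x ∈ s ×ˢ s | f x.1 = f x.2} := by
  have hfib : #{x ∈ s ×ˢ s | f x.1 = f x.2} = ∑ b, #{a ∈ s | f a = b} ^ 2 := by
    rw [card_eq_sum_card_fiberwise (f := fun x => f x.1) (t := univ) fun _ _ => mem_univ _]
    refine sum_congr rfl fun b _ => ?_
    rw [sq, ← card_product]
    congr 1
    ext ⟨a, a'⟩
    simp only [mem_filter, mem_product]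
    constructor
    · rintro ⟨⟨⟨ha, ha'⟩, h⟩, rfl⟩
      exact ⟨⟨ha, rfl⟩, ha', h.symm⟩
    · rintro ⟨⟨ha, rfl⟩, ha', h⟩
      exact ⟨⟨⟨ha, ha'⟩, h.symm⟩, rfl⟩
  rw [hfib, card_eq_sum_card_fiberwise (f := f) (t := univ) fun _ _ => mem_univ _]
  exact sq_sum_le_card_mul_sum_sq

theorem sq_sum_sub_card_mul_le_of_sum_sq_le {β : Type*} [Fintype β] (f : β → ℝ) (V : Finset β)
    (μ K : ℝ) (hsum : ∑ v, f v = Fintype.card β * μ)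
    (hsq : ∑ v, f v ^ 2 ≤ Fintype.card β * μ ^ 2 + K) :
    (∑ v ∈ V, f v - #V * μ) ^ 2 ≤ #V * K := by
  have hvar : ∑ v, (f v - μ) ^ 2 ≤ K := by
    have : ∑ v, (f v - μ) ^ 2 = ∑ v, f v ^ 2 - 2 * μ * ∑ v, f v + Fintype.card β * μ ^ 2 := by
      simp only [sub_sq, sum_add_distrib, sum_sub_distrib, ← sum_mul, ← mul_sum, sum_const,
        card_univ, nsmul_eq_mul]
      ring
    rw [this, hsum]
    linarith
  calc (∑ v ∈ V, f v - #V * μ) ^ 2 = (∑ v ∈ V, (f v - μ)) ^ 2 := by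
        rw [sum_sub_distrib, sum_const, nsmul_eq_mul]
    _ ≤ #V * ∑ v ∈ V, (f v - μ) ^ 2 := sq_sum_le_card_mul_sum_sq
    _ ≤ #V * K := by
        gcongr
        exact (sum_le_sum_of_subset_of_nonneg (subset_univ V) fun _ _ _ => sq_nonneg _).trans hvar

theorem natCard_edges_eq_sum_card_bipartiteBelow {α β : Type*} (r : α → β → Prop)
    [∀ a b, Decidable (r a b)] (s : Finset α) (t : Finset β) :
    Nat.card {x : α × β // x.1 ∈ s ∧ x.2 ∈ t ∧ r x.1 x.2} = ∑ b ∈ t, #(s.bipartiteBelow r b) := by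
  rw [Nat.subtype_card {x ∈ s ×ˢ t | r x.1 x.2} (by simp [and_assoc]), card_filter,
    sum_product_right]
  simp only [bipartiteBelow, card_filter]

namespace GpAdj

variable {p : ℕ} [Fact p.Prime]

instance : DecidableRel (GpAdj p) := fun _ _ => inferInstanceAs (Decidable (∃ _, _))

theorem iff_snd_eq {u v : (ZMod p)ˣ × ZMod p} :
    GpAdj p u v ↔ v.2 = (v.1 : ZMod p) / u.1 + u.2 := by
  constructor
  · rintro ⟨z, h1, h2⟩
    rw [h2, h1, Units.val_mul, mul_div_cancel_right₀ _ u.1.ne_zero]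
  · intro h
    refine ⟨v.1 * u.1⁻¹, by group, ?_⟩
    rw [h, Units.val_mul, Units.val_inv_eq_inv_val, div_eq_mul_inv]

theorem fst_mul_inv_sub_inv_eq {u u' v : (ZMod p)ˣ × ZMod p} (h : GpAdj p u v) (h' : GpAdj p u' v) :
    (v.1 : ZMod p) * ((u.1 : ZMod p)⁻¹ - (u'.1 : ZMod p)⁻¹) = u'.2 - u.2 := by
  rw [iff_snd_eq, div_eq_mul_inv] at h h'
  linear_combination h' - h

theorem eq_of_common_neighbors {u u' v w : (ZMod p)ˣ × ZMod p} (hne : u ≠ u')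
    (hv : GpAdj p u v) (hv' : GpAdj p u' v) (hw : GpAdj p u w) (hw' : GpAdj p u' w) : v = w := by
  have hk : (u.1 : ZMod p)⁻¹ - (u'.1 : ZMod p)⁻¹ ≠ 0 := by
    intro hk
    have h2 := fst_mul_inv_sub_inv_eq hv hv'
    rw [hk, mul_zero, eq_comm, sub_eq_zero] at h2
    rw [sub_eq_zero, inv_inj, Units.val_inj] at hk
    exact hne (Prod.ext hk h2.symm)
  have h1 : v.1 = w.1 := Units.ext <| mul_right_cancel₀ hk <|
    (fst_mul_inv_sub_inv_eq hv hv').trans (fst_mul_inv_sub_inv_eq hw hw').symm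
  refine Prod.ext h1 ?_
  rw [iff_snd_eq.mp hv, iff_snd_eq.mp hw, h1]

theorem not_common_neighbor_of_snd_eq {u u' v : (ZMod p)ˣ × ZMod p} (hne : u ≠ u') (h2 : u.2 = u'.2)
    (hv : GpAdj p u v) : ¬ GpAdj p u' v := by
  intro hv'
  have h := fst_mul_inv_sub_inv_eq hv hv'
  rw [h2, sub_self, mul_eq_zero, sub_eq_zero, inv_inj, Units.val_inj] at h
  exact h.elim v.1.ne_zero fun h1 => hne (Prod.ext h1 h2)

theorem card_neighbors (u : (ZMod p)ˣ × ZMod p) : #{v | GpAdj p u v} = p - 1 := by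
  have : ({v | GpAdj p u v} : Finset _) = univ.image fun z => (z * u.1, (z : ZMod p) + u.2) := by
    ext v
    simp only [mem_filter, mem_univ, true_and, mem_image]
    constructor
    · rintro ⟨z, h1, h2⟩
      exact ⟨z, (Prod.ext h1 h2).symm⟩
    · rintro ⟨z, rfl⟩
      exact ⟨z, rfl, rfl⟩
  rw [this, card_image_of_injective, card_univ, ZMod.card_units]
  intro z z' h
  exact Units.ext (add_right_cancel (Prod.ext_iff.mp h).2)

theorem card_common_neighbors_le (u u' : (ZMod p)ˣ × ZMod p) :
    #{v | GpAdj p u v ∧ GpAdj p u' v} ≤ if u = u' then p - 1 else if u.2 = u'.2 then 0 else 1 := by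
  split_ifs with hne h2
  · subst hne
    simp only [and_self, card_neighbors, le_refl]
  · rw [Nat.le_zero, card_eq_zero, filter_eq_empty_iff]
    exact fun v _ h => not_common_neighbor_of_snd_eq hne h2 h.1 h.2
  · refine card_le_one.mpr fun v hv w hw => ?_
    simp only [mem_filter, mem_univ, true_and] at hv hw
    exact eq_of_common_neighbors hne hv.1 hv.2 hw.1 hw.2

theorem sum_card_bipartiteBelow (U : Finset ((ZMod p)ˣ × ZMod p)) :
    ∑ v, #(U.bipartiteBelow (GpAdj p) v) = #U * (p - 1) := by
  rw [← sum_card_bipartiteAbove_eq_sum_card_bipartiteBelow]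
  exact (sum_congr rfl fun u _ => card_neighbors u).trans (sum_const_nat fun _ _ => rfl)

-- Stated with the collision count on the left, since `ℕ` truncates subtraction.
theorem sum_sq_card_bipartiteBelow_add_card_filter_snd_eq_le (U : Finset ((ZMod p)ˣ × ZMod p)) :
    ∑ v, #(U.bipartiteBelow (GpAdj p) v) ^ 2 + #{x ∈ U ×ˢ U | x.1.2 = x.2.2}
      ≤ #U * (p - 1) + #U ^ 2 := by
  have hsq : ∀ v, #(U.bipartiteBelow (GpAdj p) v) ^ 2
      = #((U ×ˢ U).bipartiteBelow (fun x v => GpAdj p x.1 v ∧ GpAdj p x.2 v) v) := by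
    intro v
    simp only [sq, ← card_product, bipartiteBelow]
    rw [filter_product (fun a => GpAdj p a v) (fun a => GpAdj p a v)]
  have hdiag : ∑ x ∈ U ×ˢ U, (if x.1 = x.2 then p - 1 else 0) = #U * (p - 1) := by
    rw [sum_ite, sum_const_zero, add_zero, sum_const, smul_eq_mul, ← diag_eq_filter, diag_card]
  simp_rw [hsq]
  rw [← sum_card_bipartiteAbove_eq_sum_card_bipartiteBelow, ← hdiag, sq, ← card_product,
    card_eq_sum_ones (U ×ˢ U), ← sum_add_distrib, Finset.card_filter, ← sum_add_distrib]
  refine sum_le_sum fun x _ => ?_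
  have := card_common_neighbors_le x.1 x.2
  simp only [bipartiteAbove] at this ⊢
  split_ifs at this ⊢ <;> omega

theorem sum_sq_card_bipartiteBelow_le (U : Finset ((ZMod p)ˣ × ZMod p)) :
    ∑ v, (#(U.bipartiteBelow (GpAdj p) v) : ℝ) ^ 2 ≤ (p - 1) * (#U + #U ^ 2 / p) := by
  have hp : 1 < p := (Fact.out : p.Prime).one_lt
  set S := #{x ∈ U ×ˢ U | x.1.2 = x.2.2}
  have hpairs : (∑ v, (#(U.bipartiteBelow (GpAdj p) v) : ℝ) ^ 2) + S ≤ #U * (p - 1) + #U ^ 2 := by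
    have := sum_sq_card_bipartiteBelow_add_card_filter_snd_eq_le U
    rw [← Nat.cast_le (α := ℝ)] at this
    push_cast [Nat.cast_sub hp.le] at this
    exact this
  have hcollision : (#U : ℝ) ^ 2 / p ≤ S := by
    have := sq_card_le_card_mul_card_filter_eq Prod.snd U
    rw [ZMod.card, ← Nat.cast_le (α := ℝ)] at this
    push_cast at this
    rw [div_le_iff₀ (by positivity)]
    linarith
  have : (p - 1) * (#U + #U ^ 2 / p) = #U * (p - 1) + #U ^ 2 - #U ^ 2 / (p : ℝ) := by
    field_simp
    ring
  linarith

end GpAdj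

/-- Expander mixing for `G_p`: for all sets `U` of left vertices and `V` of right
vertices, `| e(U,V) − |U|·|V|/p | ≤ √p · √(|U|·|V|)`. -/
theorem Gp_mixing (p : ℕ) [Fact p.Prime]
    (U V : Finset ((ZMod p)ˣ × ZMod p)) :
    |(Nat.card {uv : ((ZMod p)ˣ × ZMod p) × ((ZMod p)ˣ × ZMod p) //
          uv.1 ∈ U ∧ uv.2 ∈ V ∧ GpAdj p uv.1 uv.2} : ℝ)
        - (U.card : ℝ) * (V.card : ℝ) / (p : ℝ)|
      ≤ Real.sqrt p * Real.sqrt ((U.card : ℝ) * (V.card : ℝ)) := by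
  have hp : 1 < p := (Fact.out : p.Prime).one_lt
  have hcard : (Fintype.card ((ZMod p)ˣ × ZMod p) : ℝ) = p * (p - 1) := by
    rw [Fintype.card_prod, ZMod.card_units, ZMod.card]
    push_cast [Nat.cast_sub hp.le]
    ring
  set d : (ZMod p)ˣ × ZMod p → ℝ := fun v => #(U.bipartiteBelow (GpAdj p) v)
  have hsum : ∑ v, d v = Fintype.card ((ZMod p)ˣ × ZMod p) * (#U / p) := by
    have := GpAdj.sum_card_bipartiteBelow U
    rw [← Nat.cast_inj (R := ℝ)] at this
    push_cast [Nat.cast_sub hp.le] at this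
    rw [this, hcard]
    field_simp
  have hsq : ∑ v, d v ^ 2 ≤ Fintype.card ((ZMod p)ˣ × ZMod p) * (#U / p) ^ 2 + (p - 1) * #U := by
    rw [hcard]
    convert GpAdj.sum_sq_card_bipartiteBelow_le U using 1
    field_simp
    ring
  have hmix := sq_sum_sub_card_mul_le_of_sum_sq_le d V _ _ hsum hsq
  rw [natCard_edges_eq_sum_card_bipartiteBelow, Nat.cast_sum, ← Real.sqrt_mul (Nat.cast_nonneg p)]
  refine Real.abs_le_sqrt ?_
  calc (∑ v ∈ V, d v - #U * #V / p : ℝ) ^ 2 = (∑ v ∈ V, d v - #V * (#U / p)) ^ 2 := by ring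
    _ ≤ (#V : ℝ) * ((p - 1) * #U) := hmix
    _ ≤ (p : ℝ) * (#U * #V) := by
        nlinarith [Nat.cast_nonneg (α := ℝ) #U, Nat.cast_nonneg (α := ℝ) #V]
end

section
/- Let p be a prime and fix α ∈ (0,1). For any subset S ⊆ F_p^× × F_p of right vertices of G_p with |S| ≤ (α/2)·p², the set B(S,α) := { (a,c) ∈ F_p^× × F_p : the number of z ∈ F_p^× with (z·a, z + c) ∈ S is at least α·p } satisfies |B(S,α)| ≤ 4·|S| / (α²·p). -/
/-!
Let `d(u)` be the number of neighbours in `S` of a left vertex `u`. For a fixed label `z` the map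
`u ↦ (z a, z + c)` is a bijection, so `∑ d = (p - 1)|S|` and `d` has mean `|S|/p`. Two right
vertices with distinct second coordinates have at most one common neighbour and two with equal
second coordinate have none, so `∑ d² ≤ ∑ d + #{(r, r') ∈ S² | r.2 ≠ r'.2}`; by Cauchy–Schwarz over
the fibres of the second coordinate the last term is at most `(1 - 1/p)|S|²`. Hence
`∑ (d - |S|/p)² ≤ (p - 1)|S|`. As `|S|/p ≤ αp/2`, each vertex of `B(S, α)` deviates from the mean
by at least `αp/2`, and Chebyshev's inequality gives `|B(S, α)| (αp/2)² ≤ p|S|`.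
-/

open Finset

theorem card_sq_le_card_mul_card_filter_apply_eq {α β : Type*} [DecidableEq β] [Fintype β]
    (g : α → β) (S : Finset α) :
    #S ^ 2 ≤ Fintype.card β * #{x ∈ S ×ˢ S | g x.1 = g x.2} := by
  have hsum : #S = ∑ b, #{r ∈ S | g r = b} := card_eq_sum_card_fiberwise fun _ _ ↦ mem_univ _
  have hsq : #{x ∈ S ×ˢ S | g x.1 = g x.2} = ∑ b, #{r ∈ S | g r = b} ^ 2 := by
    rw [card_eq_sum_card_fiberwise (f := fun x ↦ g x.1) fun _ _ ↦ mem_univ _]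
    refine sum_congr rfl fun b _ ↦ ?_
    rw [sq, ← card_product, filter_filter]
    congr 1
    ext ⟨r, r'⟩
    simp only [mem_filter, mem_product]
    grind
  rw [hsum, hsq]
  exact sq_sum_le_card_mul_sum_sq

section SecondMoment

variable {ι : Type*} (s : Finset ι) (f : ι → ℝ)

theorem sum_sub_sq_eq (t : ℝ) :
    ∑ i ∈ s, (f i - t) ^ 2 = ∑ i ∈ s, f i ^ 2 - 2 * t * ∑ i ∈ s, f i + #s * t ^ 2 := by
  simp only [sub_sq, sum_add_distrib, sum_sub_distrib, sum_const, nsmul_eq_mul, ← sum_mul,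
    ← mul_sum]
  ring

theorem card_filter_le_mul_sq_le_sum_sub_sq {t ε θ : ℝ} (hε : 0 ≤ ε) (hθ : t + ε ≤ θ) :
    #{i ∈ s | θ ≤ f i} * ε ^ 2 ≤ ∑ i ∈ s, (f i - t) ^ 2 :=
  calc #{i ∈ s | θ ≤ f i} * ε ^ 2 = ∑ i ∈ s with θ ≤ f i, ε ^ 2 := by
        rw [sum_const, nsmul_eq_mul]
    _ ≤ ∑ i ∈ s with θ ≤ f i, (f i - t) ^ 2 :=
        sum_le_sum fun i hi ↦ pow_le_pow_left₀ hε (by linarith [(mem_filter.1 hi).2]) 2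
    _ ≤ ∑ i ∈ s, (f i - t) ^ 2 :=
        sum_le_sum_of_subset_of_nonneg (filter_subset _ _) fun _ _ _ ↦ sq_nonneg _

end SecondMoment

namespace Gp

variable {F : Type*} [Field F]

/-- The right endpoint of the edge labelled `z` at a left vertex. -/
def neighbor (z : Fˣ) : Fˣ × F ≃ Fˣ × F :=
  (Equiv.mulLeft z).prodCongr (Equiv.addLeft (z : F))

@[simp]
theorem neighbor_apply (z : Fˣ) (u : Fˣ × F) : neighbor z u = (z * u.1, (z : F) + u.2) := rfl

theorem eq_of_neighbor_eq_of_neighbor_eq {z z' w w' : Fˣ} {u v : Fˣ × F} (hz : z ≠ z')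
    (h : neighbor z u = neighbor w v) (h' : neighbor z' u = neighbor w' v) :
    z = w ∧ z' = w' ∧ u = v := by
  simp only [neighbor_apply, Prod.mk.injEq, Units.ext_iff, Units.val_mul] at h h'
  obtain ⟨h1, h2⟩ := h
  obtain ⟨h3, h4⟩ := h'
  have hzw : (z : F) = w := by
    have hne : ((z' : F) - z) * u.1 ≠ 0 :=
      mul_ne_zero (sub_ne_zero.2 fun h ↦ hz (Units.ext h).symm) u.1.ne_zero
    -- `z' / z = w' / w` and `z - z' = w - w'`
    have : ((z' : F) - z) * u.1 * ((w : F) - z) = 0 := by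
      linear_combination w * h3 - (z' + w - z) * h1 + w * v.1 * (h2 - h4)
    exact (sub_eq_zero.1 ((mul_eq_zero.1 this).resolve_left hne)).symm
  have hzw' : (z' : F) = w' := by linear_combination h4 - h2 + hzw
  refine ⟨Units.ext hzw, Units.ext hzw', Prod.ext (Units.ext ?_) ?_⟩
  · rw [hzw] at h1
    exact mul_left_cancel₀ w.ne_zero h1
  · rw [hzw] at h2
    exact add_left_cancel h2

variable [Fintype F] [DecidableEq F]

def degree (S : Finset (Fˣ × F)) (u : Fˣ × F) : ℕ := #{z | neighbor z u ∈ S}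

variable (S : Finset (Fˣ × F))

theorem sum_degree : ∑ u, degree S u = Fintype.card Fˣ * #S := by
  simp only [degree, card_filter]
  rw [sum_comm]
  simp only [(neighbor _).sum_comp fun v ↦ if v ∈ S then 1 else 0, sum_boole, sum_const, card_univ,
    smul_eq_mul, subset_univ, filter_mem_eq_of_subset, Nat.cast_id]

theorem sum_degree_sq_le :
    ∑ u, degree S u ^ 2 ≤ ∑ u, degree S u + #{x ∈ S ×ˢ S | x.1.2 ≠ x.2.2} := by
  have hsplit (u) :
      degree S u ^ 2 = degree S u + #({z | neighbor z u ∈ S} : Finset Fˣ).offDiag := by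
    rw [offDiag_card, sq]
    exact (Nat.add_sub_cancel' (Nat.le_mul_self _)).symm
  have hoff :
      ∑ u, #({z | neighbor z u ∈ S} : Finset Fˣ).offDiag ≤ #{x ∈ S ×ˢ S | x.1.2 ≠ x.2.2} := by
    rw [← card_sigma]
    refine card_le_card_of_injOn (fun x ↦ (neighbor x.2.1 x.1, neighbor x.2.2 x.1)) ?_ ?_
    · rintro ⟨u, z, z'⟩ hx
      simp only [mem_coe, mem_sigma, mem_offDiag, mem_filter, mem_univ, true_and] at hx
      simp only [mem_coe, mem_filter, mem_product]
      exact ⟨⟨hx.1, hx.2.1⟩, fun h ↦ hx.2.2 (Units.ext (add_right_cancel h))⟩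
    · rintro ⟨u, z, z'⟩ hx ⟨v, w, w'⟩ - h
      simp only [mem_coe, mem_sigma, mem_offDiag, mem_filter, mem_univ, true_and] at hx
      simp only [Prod.mk.injEq] at h
      obtain ⟨rfl, rfl, rfl⟩ := eq_of_neighbor_eq_of_neighbor_eq hx.2.2 h.1 h.2
      rfl
  rw [sum_congr rfl fun u _ ↦ hsplit u, sum_add_distrib]
  exact Nat.add_le_add_left hoff _

theorem sum_degree_sub_sq_le :
    ∑ u, ((degree S u : ℝ) - #S / Fintype.card F) ^ 2 ≤ (Fintype.card F - 1) * #S := by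
  have hunits : (Fintype.card Fˣ : ℝ) = Fintype.card F - 1 := by
    rw [Fintype.card_units, Nat.cast_sub Fintype.card_pos, Nat.cast_one]
  have hsum : ∑ u, (degree S u : ℝ) = (Fintype.card F - 1) * #S := by
    rw [← hunits]; exact_mod_cast sum_degree S
  have hsum_sq : ∑ u, (degree S u : ℝ) ^ 2 ≤
      ∑ u, (degree S u : ℝ) + #{x ∈ S ×ˢ S | x.1.2 ≠ x.2.2} := by
    exact_mod_cast sum_degree_sq_le S
  have hE : (#S : ℝ) ^ 2 ≤ Fintype.card F * #{x ∈ S ×ˢ S | x.1.2 = x.2.2} := by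
    exact_mod_cast card_sq_le_card_mul_card_filter_apply_eq Prod.snd S
  have hTE : (#{x ∈ S ×ˢ S | x.1.2 ≠ x.2.2} : ℝ) + #{x ∈ S ×ˢ S | x.1.2 = x.2.2} = #S ^ 2 := by
    have := card_filter_add_card_filter_not (s := S ×ˢ S) (fun x ↦ x.1.2 = x.2.2)
    rw [card_product, ← sq, add_comm] at this
    exact_mod_cast this
  set q : ℝ := (Fintype.card F : ℝ)
  have hq : 0 < q := by simp [q, Fintype.card_pos]
  have hT : (#{x ∈ S ×ˢ S | x.1.2 ≠ x.2.2} : ℝ) ≤ (q - 1) * #S ^ 2 / q := by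
    rw [le_div_iff₀ hq]; nlinarith
  rw [sum_sub_sq_eq, hsum, card_univ, Fintype.card_prod, Nat.cast_mul, hunits]
  calc _ ≤ (q - 1) * #S + (q - 1) * #S ^ 2 / q - 2 * (#S / q) * ((q - 1) * #S)
        + (q - 1) * q * (#S / q) ^ 2 := by gcongr; linarith
    _ = (q - 1) * #S := by field_simp; ring

theorem card_filter_le_degree_le {α : ℝ} (hα : 0 < α)
    (hS : (#S : ℝ) ≤ α / 2 * Fintype.card F ^ 2) :
    (#{u | α * Fintype.card F ≤ degree S u} : ℝ) ≤ 4 * #S / (α ^ 2 * Fintype.card F) := by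
  set q : ℝ := (Fintype.card F : ℝ)
  have hq : 0 < q := by simp [q, Fintype.card_pos]
  have hmean : #S / q + α * q / 2 ≤ α * q := by
    rw [div_add' _ _ _ hq.ne', div_le_iff₀ hq]; linarith
  have hcheb := card_filter_le_mul_sq_le_sum_sub_sq univ (fun u ↦ (degree S u : ℝ))
    (by positivity) hmean
  have hvar := sum_degree_sub_sq_le S
  rw [le_div_iff₀ (by positivity)]
  refine le_of_mul_le_mul_right ?_ hq
  nlinarith

end Gp

theorem Gp_sampler_bound_general (p : ℕ) [Fact p.Prime] (α : ℝ) (hα0 : 0 < α)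
    (S : Finset ((ZMod p)ˣ × ZMod p)) (hS : (S.card : ℝ) ≤ (α / 2) * (p : ℝ) ^ 2) :
    (Nat.card {u : (ZMod p)ˣ × ZMod p //
        α * (p : ℝ) ≤
          (Nat.card {z : (ZMod p)ˣ //
              ((z * u.1, (z : ZMod p) + u.2) : (ZMod p)ˣ × ZMod p) ∈ S} : ℝ)} : ℝ)
      ≤ 4 * (S.card : ℝ) / (α ^ 2 * (p : ℝ)) := by
  have hdeg (u : (ZMod p)ˣ × ZMod p) :
      Nat.card {z : (ZMod p)ˣ // ((z * u.1, (z : ZMod p) + u.2) : (ZMod p)ˣ × ZMod p) ∈ S} =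
        Gp.degree S u := by
    rw [Nat.card_eq_fintype_card, Fintype.card_subtype]
    rfl
  simp_rw [hdeg]
  rw [Nat.card_eq_fintype_card, Fintype.card_subtype]
  have := Gp.card_filter_le_degree_le S hα0 (by rwa [ZMod.card])
  rwa [ZMod.card] at this

/-- Sampler bound for `G_p`: fix `α ∈ (0,1)`. For any set `S` of right vertices with
`|S| ≤ (α/2)·p²`, the set `B(S,α)` of left vertices `(a,c)` having at least `α·p`
neighbors in `S` satisfies `|B(S,α)| ≤ 4·|S| / (α²·p)`. -/
theorem Gp_sampler_bound (p : ℕ) [Fact p.Prime] (α : ℝ) (hα0 : 0 < α) (hα1 : α < 1)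
    (S : Finset ((ZMod p)ˣ × ZMod p)) (hS : (S.card : ℝ) ≤ (α / 2) * (p : ℝ) ^ 2) :
    (Nat.card {u : (ZMod p)ˣ × ZMod p //
        α * (p : ℝ) ≤
          (Nat.card {z : (ZMod p)ˣ //
              ((z * u.1, (z : ZMod p) + u.2) : (ZMod p)ˣ × ZMod p) ∈ S} : ℝ)} : ℝ)
      ≤ 4 * (S.card : ℝ) / (α ^ 2 * (p : ℝ)) :=
  Gp_sampler_bound_general p α hα0 S hS
end

section
/- Let G be a d-regular bipartite graph with parts L and R, both finite of the same cardinality N, and let A : L × R → ℝ be its biadjacency matrix (A(u,v) = 1 if u is adjacent to v and 0 otherwise). Suppose λ ≥ 0 is such that for every function f : R → ℝ with ∑_{v ∈ R} f(v) = 0 one has ‖A·f‖₂ ≤ λ·‖f‖₂ (where (A·f)(u) = ∑_{v ∈ R} A(u,v)·f(v) and ‖·‖₂ is the Euclidean norm). Then for all subsets U ⊆ L and V ⊆ R, the number e(U,V) of adjacent pairs satisfies | e(U,V) − d·|U|·|V|/N | ≤ λ·√(|U|·|V|). -/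
/-!
Test `A` against the mean-zero vector `f = 𝟙_V - (|V|/N)·𝟙`. Since every row of `A` sums to `d`,
`∑_{u ∈ U} (A f)(u) = e(U,V) - d|U||V|/N`, while `‖f‖₂² = |V|(1 - |V|/N) ≤ |V|`.
Cauchy–Schwarz over `U` and the spectral hypothesis then give
`|e(U,V) - d|U||V|/N| ≤ √|U| · ‖A f‖₂ ≤ √|U| · λ‖f‖₂ ≤ λ √(|U||V|)`.
-/

open Finset

theorem abs_sum_le_sqrt_card_mul_sqrt_sum_sq {ι : Type*} [Fintype ι] (s : Finset ι) (g : ι → ℝ) :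
    |∑ i ∈ s, g i| ≤ √(#s : ℝ) * √(∑ i, g i ^ 2) := by
  rw [← Real.sqrt_sq_eq_abs, ← Real.sqrt_mul (Nat.cast_nonneg _)]
  gcongr
  calc (∑ i ∈ s, g i) ^ 2 ≤ #s * ∑ i ∈ s, g i ^ 2 := sq_sum_le_card_mul_sum_sq
    _ ≤ #s * ∑ i, g i ^ 2 := by
      gcongr
      exact subset_univ s

section CenteredIndicator

variable {R : Type*} [Fintype R] [DecidableEq R]

noncomputable def centeredIndicator (V : Finset R) (v : R) : ℝ :=
  (if v ∈ V then 1 else 0) - (#V : ℝ) / Fintype.card R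

theorem sum_centeredIndicator (V : Finset R) : ∑ v, centeredIndicator V v = 0 := by
  rcases isEmpty_or_nonempty R with _ | _
  · exact sum_of_isEmpty _
  simp only [centeredIndicator, sum_sub_distrib, sum_boole, filter_mem_eq_inter, univ_inter,
    sum_const, card_univ, nsmul_eq_mul]
  field_simp
  ring

theorem sum_sq_centeredIndicator_le (V : Finset R) :
    ∑ v, centeredIndicator V v ^ 2 ≤ #V := by
  set c : ℝ := #V / Fintype.card R
  -- As `∑ f = 0`, `∑ f² = ∑ f · (𝟙_V - c) = ∑_{v ∈ V} f v = |V| (1 - c)`.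
  have hsq : ∀ v, centeredIndicator V v ^ 2
      = (if v ∈ V then centeredIndicator V v else 0) - c * centeredIndicator V v := by
    intro v
    unfold centeredIndicator
    split_ifs <;> ring
  have hV : ∑ v ∈ V, centeredIndicator V v = #V * (1 - c) := by
    rw [sum_congr rfl fun v hv =>
      show centeredIndicator V v = 1 - c by simp only [centeredIndicator, if_pos hv, c], sum_const,
      nsmul_eq_mul]
  rw [sum_congr rfl fun v _ => hsq v, sum_sub_distrib, ← mul_sum, sum_centeredIndicator,
    sum_ite_mem, univ_inter, hV]
  have hc : 0 ≤ c := by positivity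
  nlinarith [Nat.cast_nonneg (α := ℝ) #V]

theorem sum_sum_mul_centeredIndicator {L : Type*} (A : L → R → ℝ) (d : ℝ)
    (hrow : ∀ u, ∑ v, A u v = d) (U : Finset L) (V : Finset R) :
    ∑ u ∈ U, ∑ v, A u v * centeredIndicator V v
      = ∑ u ∈ U, ∑ v ∈ V, A u v - d * #U * #V / Fintype.card R := by
  have hinner : ∀ u, ∑ v, A u v * centeredIndicator V v
      = ∑ v ∈ V, A u v - d * (#V / Fintype.card R) := by
    intro u
    simp only [centeredIndicator, mul_sub, mul_ite, mul_one, mul_zero, sum_sub_distrib,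
      sum_ite_mem, univ_inter, ← sum_mul, hrow]
  rw [sum_congr rfl fun u _ => hinner u, sum_sub_distrib, sum_const, nsmul_eq_mul]
  ring

end CenteredIndicator

theorem card_filter_adj_product_eq_sum_sum {L R : Type*} (Adj : L → R → Prop)
    [∀ u v, Decidable (Adj u v)] (U : Finset L) (V : Finset R) :
    (#{uv ∈ U ×ˢ V | Adj uv.1 uv.2} : ℝ) = ∑ u ∈ U, ∑ v ∈ V, if Adj u v then (1 : ℝ) else 0 := by
  rw [card_filter, sum_product]
  push_cast
  rfl

theorem expander_mixing_lemma_general {L R : Type*} [Fintype L] [Fintype R]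
    (N d : ℕ) (hNR : Fintype.card R = N)
    (Adj : L → R → Prop) [∀ u v, Decidable (Adj u v)]
    (hleft : ∀ u : L, (Finset.univ.filter (fun v : R => Adj u v)).card = d)
    (lam : ℝ) (hlam : 0 ≤ lam)
    (hspec : ∀ f : R → ℝ, (∑ v : R, f v) = 0 →
      Real.sqrt (∑ u : L, (∑ v : R, (if Adj u v then (1 : ℝ) else 0) * f v) ^ 2)
        ≤ lam * Real.sqrt (∑ v : R, (f v) ^ 2))
    (U : Finset L) (V : Finset R) :
    |(((U ×ˢ V).filter (fun uv : L × R => Adj uv.1 uv.2)).card : ℝ)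
        - (d : ℝ) * (U.card : ℝ) * (V.card : ℝ) / (N : ℝ)|
      ≤ lam * Real.sqrt ((U.card : ℝ) * (V.card : ℝ)) := by
  classical
  set A : L → R → ℝ := fun u v => if Adj u v then 1 else 0
  set f := centeredIndicator V
  have hrow : ∀ u, ∑ v, A u v = d := fun u => by rw [sum_boole, hleft u]
  rw [card_filter_adj_product_eq_sum_sum, ← hNR,
    ← sum_sum_mul_centeredIndicator A d hrow U V, Real.sqrt_mul (Nat.cast_nonneg _)]
  calc |∑ u ∈ U, ∑ v, A u v * f v|
      ≤ √(#U : ℝ) * √(∑ u, (∑ v, A u v * f v) ^ 2) := abs_sum_le_sqrt_card_mul_sqrt_sum_sq U _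
    _ ≤ √(#U : ℝ) * (lam * √(∑ v, f v ^ 2)) := by gcongr; exact hspec f (sum_centeredIndicator V)
    _ ≤ √(#U : ℝ) * (lam * √(#V : ℝ)) := by gcongr; exact sum_sq_centeredIndicator_le V
    _ = lam * (√(#U : ℝ) * √(#V : ℝ)) := by ring

/-- Expander mixing lemma for `d`-regular bipartite graphs: if both parts have `N`
vertices and the biadjacency operator contracts mean-zero vectors by a factor
`λ` in Euclidean norm, then `| e(U,V) − d·|U|·|V|/N | ≤ λ·√(|U|·|V|)` for all
`U ⊆ L`, `V ⊆ R`. -/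
theorem expander_mixing_lemma {L R : Type*} [Fintype L] [Fintype R]
    (N d : ℕ) (hNL : Fintype.card L = N) (hNR : Fintype.card R = N)
    (Adj : L → R → Prop) [∀ u v, Decidable (Adj u v)]
    (hleft : ∀ u : L, (Finset.univ.filter (fun v : R => Adj u v)).card = d)
    (hright : ∀ v : R, (Finset.univ.filter (fun u : L => Adj u v)).card = d)
    (lam : ℝ) (hlam : 0 ≤ lam)
    (hspec : ∀ f : R → ℝ, (∑ v : R, f v) = 0 →
      Real.sqrt (∑ u : L, (∑ v : R, (if Adj u v then (1 : ℝ) else 0) * f v) ^ 2)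
        ≤ lam * Real.sqrt (∑ v : R, (f v) ^ 2))
    (U : Finset L) (V : Finset R) :
    |(((U ×ˢ V).filter (fun uv : L × R => Adj uv.1 uv.2)).card : ℝ)
        - (d : ℝ) * (U.card : ℝ) * (V.card : ℝ) / (N : ℝ)|
      ≤ lam * Real.sqrt ((U.card : ℝ) * (V.card : ℝ)) :=
  expander_mixing_lemma_general N d hNR Adj hleft lam hlam hspec U V
end
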